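/- Let Q be a real symmetric m×m matrix with positive diagonal, write Q_D = diag(Q), A = Q_D^{-1}(Q - Q_D), and suppose all eigenvalues of A exceed -1 and ρ(A) = max_i |λ_i(A)| < 1. Then det Q ≤ det Q_D, and det Q ≥ exp(-m ρ(A)²/(1 + λ_min(A))) · det Q_D. -/

import Mathlib

open Matrix Finset Real

/-!
Scaling by `D = diag(Q)^{-1/2}` turns `Q` into the symmetric matrix `M = D Q D` with unit
diagonal, `det Q = det Q_D · det M`, and `A = D (M - 1) D⁻¹`. Hence the eigenvalues of `M` are
`1 + λᵢ` with `λᵢ` eigenvalues of `A`, and `∑ λᵢ = tr M - m = 0`. Now `det M = ∏ (1 + λᵢ)`, and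
`λ - ρ² / (1 + λ_min) ≤ λ / (1 + λ) ≤ log (1 + λ) ≤ λ` bounds its logarithm between
`-m ρ² / (1 + λ_min)` and `0`.
-/

namespace Real

lemma sub_sq_div_le_log_one_add {x a ρ : ℝ} (ha : -1 < a) (hax : a ≤ x) (hxρ : |x| ≤ ρ) :
    x - ρ ^ 2 / (1 + a) ≤ log (1 + x) := by
  have hx : 0 < 1 + x := by linarith
  have hsq : x ^ 2 / (1 + x) ≤ ρ ^ 2 / (1 + a) :=
    div_le_div₀ (sq_nonneg ρ) (sq_le_sq' (abs_le.mp hxρ).1 (abs_le.mp hxρ).2) (by linarith)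
      (by linarith)
  calc x - ρ ^ 2 / (1 + a) ≤ x - x ^ 2 / (1 + x) := by linarith
    _ = 1 - (1 + x)⁻¹ := by field_simp; ring
    _ ≤ log (1 + x) := one_sub_inv_le_log_of_pos hx

variable {ι : Type*} [Fintype ι] {x : ι → ℝ}

lemma prod_one_add_le_one (hx : ∀ i, -1 ≤ x i) (hsum : ∑ i, x i = 0) :
    ∏ i, (1 + x i) ≤ 1 :=
  calc ∏ i, (1 + x i) ≤ ∏ i, exp (x i) :=
        prod_le_prod (fun i _ => by linarith [hx i]) fun i _ => by linarith [add_one_le_exp (x i)]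
    _ = 1 := by rw [← exp_sum, hsum, exp_zero]

lemma exp_le_prod_one_add {a ρ : ℝ} (ha : -1 < a) (hsum : ∑ i, x i = 0)
    (hx : ∀ i, a ≤ x i ∧ |x i| ≤ ρ) :
    exp (-(Fintype.card ι) * ρ ^ 2 / (1 + a)) ≤ ∏ i, (1 + x i) :=
  calc exp (-(Fintype.card ι) * ρ ^ 2 / (1 + a)) = ∏ i, exp (x i - ρ ^ 2 / (1 + a)) := by
        rw [← exp_sum, sum_sub_distrib, hsum, sum_const, card_univ, nsmul_eq_mul]
        ring_nf
    _ ≤ ∏ i, (1 + x i) := prod_le_prod (fun i _ => (exp_pos _).le) fun i _ => by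
        rw [← exp_log (show 0 < 1 + x i by linarith [(hx i).1])]
        exact exp_le_exp.2 (sub_sq_div_le_log_one_add ha (hx i).1 (hx i).2)

end Real

namespace Matrix

variable {n : Type*} [Fintype n] [DecidableEq n]

section CommRing

variable {R : Type*} [CommRing R] {P D : Matrix n n R}

lemma isUnit_det_of_mul_self_eq_inv (hP : IsUnit P.det) (hD : D * D = P⁻¹) : IsUnit D.det := by
  have : IsUnit (D.det * D.det) := by
    rw [← det_mul, hD, det_nonsing_inv]; exact hP.ringInverse
  exact isUnit_of_mul_isUnit_left this

lemma det_eq_det_mul_det_mul_mul (hP : IsUnit P.det) (hD : D * D = P⁻¹) (Q : Matrix n n R) :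
    Q.det = P.det * (D * Q * D).det := by
  have h : D.det * D.det * P.det = 1 := by
    rw [← det_mul, ← det_mul, hD, nonsing_inv_mul _ hP, det_one]
  rw [det_mul, det_mul]
  linear_combination (-Q.det) * h

lemma inv_mul_sub_self_eq (hP : IsUnit P.det) (hD : D * D = P⁻¹) (Q : Matrix n n R) :
    P⁻¹ * (Q - P) = D * (D * Q * D - 1) * D⁻¹ := by
  have hDD : D * D⁻¹ = 1 := mul_nonsing_inv _ (isUnit_det_of_mul_self_eq_inv hP hD)
  calc P⁻¹ * (Q - P) = D * D * Q * (D * D⁻¹) - D * D⁻¹ := by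
        rw [hD, hDD, Matrix.mul_sub, nonsing_inv_mul _ hP, Matrix.mul_one]
    _ = D * (D * Q * D - 1) * D⁻¹ := by noncomm_ring

lemma exists_mulVec_eq_smul_conj {M : Matrix n n R} (hD : IsUnit D.det) {μ : R}
    (h : ∃ v ≠ 0, M *ᵥ v = μ • v) : ∃ w ≠ 0, (D * M * D⁻¹) *ᵥ w = μ • w := by
  obtain ⟨v, hv0, hv⟩ := h
  refine ⟨D *ᵥ v, fun h0 => hv0 ?_, ?_⟩
  · exact mulVec_injective_of_isUnit ((isUnit_iff_isUnit_det D).2 hD)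
      (h0.trans (mulVec_zero D).symm)
  · rw [mulVec_mulVec, Matrix.mul_assoc, nonsing_inv_mul _ hD, Matrix.mul_one, ← mulVec_mulVec,
      hv, mulVec_smul]

end CommRing

lemma IsHermitian.exists_mulVec_eq_eigenvalues_smul {𝕜 : Type*} [RCLike 𝕜] {M : Matrix n n 𝕜}
    (hM : M.IsHermitian) (i : n) :
    ∃ v ≠ 0, M *ᵥ v = hM.eigenvalues i • v :=
  ⟨hM.eigenvectorBasis i, fun h => hM.eigenvectorBasis.orthonormal.ne_zero i
    (WithLp.ofLp_injective _ h), hM.mulVec_eigenvectorBasis i⟩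

lemma diagonal_inv_sqrt_mul_self {q : n → ℝ} (hq : ∀ i, 0 < q i) :
    diagonal (fun i => (√(q i))⁻¹) * diagonal (fun i => (√(q i))⁻¹) = (diagonal q)⁻¹ := by
  refine (inv_eq_left_inv ?_).symm
  rw [diagonal_mul_diagonal, diagonal_mul_diagonal, ← diagonal_one]
  congr 1
  ext i
  rw [← mul_inv, mul_self_sqrt (hq i).le, inv_mul_cancel₀ (hq i).ne']

lemma isHermitian_diagonal_mul_mul_diagonal {Q : Matrix n n ℝ} (hQ : Q.IsSymm) (d : n → ℝ) :
    (diagonal d * Q * diagonal d).IsHermitian := by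
  simpa using isHermitian_conjTranspose_mul_mul (diagonal d) (isHermitian_iff_isSymm.2 hQ)

lemma diagonal_inv_sqrt_mul_mul_apply_self {Q : Matrix n n ℝ} (hQ : ∀ i, 0 < Q i i) (i : n) :
    (diagonal (fun i => (√(Q i i))⁻¹) * Q * diagonal (fun i => (√(Q i i))⁻¹)) i i = 1 := by
  rw [mul_diagonal, diagonal_mul, mul_right_comm, ← mul_inv, mul_self_sqrt (hQ i).le,
    inv_mul_cancel₀ (hQ i).ne']

lemma IsHermitian.sum_eigenvalues_sub_one {M : Matrix n n ℝ} (hM : M.IsHermitian)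
    (hdiag : ∀ i, M i i = 1) : ∑ i, (hM.eigenvalues i - 1) = 0 := by
  have := hM.trace_eq_sum_eigenvalues
  simp_all [trace]

end Matrix

theorem ipsen_lee_determinant_comparison_general (m : ℕ)
    (Q : Matrix (Fin m) (Fin m) ℝ) (hsymm : Q.IsSymm)
    (hdiag : ∀ i, 0 < Q i i)
    (QD A : Matrix (Fin m) (Fin m) ℝ)
    (hQD : QD = Matrix.diagonal (fun i => Q i i))
    (hA : A = QD⁻¹ * (Q - QD))
    (ρ lamMin : ℝ)
    (hbounds : ∀ (lam : ℝ) (v : Fin m → ℝ), v ≠ 0 → A.mulVec v = lam • v →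
      lamMin ≤ lam ∧ |lam| ≤ ρ)
    (hlamMin : -1 < lamMin) :
    Q.det ≤ QD.det ∧
    Real.exp (-(m : ℝ) * ρ^2 / (1 + lamMin)) * QD.det ≤ Q.det := by
  subst hQD hA
  set D := diagonal fun i => (√(Q i i))⁻¹
  have hQD : 0 < (diagonal fun i => Q i i).det := by
    rw [det_diagonal]; exact prod_pos fun i _ => hdiag i
  have hP := hQD.ne'.isUnit
  have hD := diagonal_inv_sqrt_mul_self hdiag
  have hM : (D * Q * D).IsHermitian := isHermitian_diagonal_mul_mul_diagonal hsymm _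
  have hx : ∀ i, lamMin ≤ hM.eigenvalues i - 1 ∧ |hM.eigenvalues i - 1| ≤ ρ := by
    intro i
    obtain ⟨v, hv0, hv⟩ := hM.exists_mulVec_eq_eigenvalues_smul i
    obtain ⟨w, hw0, hw⟩ := exists_mulVec_eq_smul_conj (M := D * Q * D - 1)
      (μ := hM.eigenvalues i - 1) (isUnit_det_of_mul_self_eq_inv hP hD)
      ⟨v, hv0, by rw [sub_mulVec, one_mulVec, hv, sub_smul, one_smul]⟩
    exact hbounds _ w hw0 (by rwa [inv_mul_sub_self_eq hP hD])
  have hsum := hM.sum_eigenvalues_sub_one (diagonal_inv_sqrt_mul_mul_apply_self hdiag)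
  have hdetM : (D * Q * D).det = ∏ i, (1 + (hM.eigenvalues i - 1)) := by
    rw [hM.det_eq_prod_eigenvalues]; simp
  rw [det_eq_det_mul_det_mul_mul hP hD Q, hdetM]
  refine ⟨mul_le_of_le_one_right hQD.le
    (prod_one_add_le_one (fun i => by linarith [(hx i).1]) hsum), ?_⟩
  rw [mul_comm]
  refine mul_le_mul_of_nonneg_left ?_ hQD.le
  simpa using exp_le_prod_one_add hlamMin hsum hx

theorem ipsen_lee_determinant_comparison (m : ℕ)
    (Q : Matrix (Fin m) (Fin m) ℝ) (hsymm : Q.IsSymm)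
    (hdiag : ∀ i, 0 < Q i i)
    (QD A : Matrix (Fin m) (Fin m) ℝ)
    (hQD : QD = Matrix.diagonal (fun i => Q i i))
    (hA : A = QD⁻¹ * (Q - QD))
    (ρ lamMin : ℝ)
    (hbounds : ∀ (lam : ℝ) (v : Fin m → ℝ), v ≠ 0 → A.mulVec v = lam • v →
      lamMin ≤ lam ∧ |lam| ≤ ρ)
    (hlamMin : -1 < lamMin) (hρ : ρ < 1) :
    Q.det ≤ QD.det ∧
    Real.exp (-(m : ℝ) * ρ^2 / (1 + lamMin)) * QD.det ≤ Q.det :=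
  ipsen_lee_determinant_comparison_general m Q hsymm hdiag QD A hQD hA ρ lamMin hbounds hlamMin
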